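/- For every subset E of [m], the subspace L_E of tables depending only on coordinates in E equals the span of the incremental subspaces N_F over all subsets F of E: L_E = Σ_{F⊂E} N_F. -/

import Mathlib

open Finset

namespace Hier

variable {m : ℕ}

abbrev Cell (I : Fin m → ℕ) := ∀ j, Fin (I j)

variable (I : Fin m → ℕ)

/-- standard inner product on ℚ^I -/
def dot (x y : Cell I → ℚ) : ℚ := ∑ i, x i * y i

/-- L_E: tables depending only on the coordinates in E -/
def LL (E : Finset (Fin m)) : Submodule ℚ (Cell I → ℚ) where
  carrier := {x | ∀ i i' : Cell I, (∀ j ∈ E, i j = i' j) → x i = x i'}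
  zero_mem' := by intro i i' _; rfl
  add_mem' := by
    intro a b ha hb i i' h
    simp only [Pi.add_apply, ha i i' h, hb i i' h]
  smul_mem' := by
    intro c a ha i i' h
    simp only [Pi.smul_apply, ha i i' h]

/-- orthogonal complement w.r.t. the standard inner product -/
def perp (S : Submodule ℚ (Cell I → ℚ)) : Submodule ℚ (Cell I → ℚ) where
  carrier := {y | ∀ x ∈ S, dot I x y = 0}
  zero_mem' := by intro x hx; simp [dot]
  add_mem' := by
    intro a b ha hb x hx
    have h1 := ha x hx
    have h2 := hb x hx
    simp only [dot, Pi.add_apply, mul_add, Finset.sum_add_distrib] at *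
    rw [h1, h2]; ring
  smul_mem' := by
    intro c a ha x hx
    have h1 := ha x hx
    simp only [dot, Pi.smul_apply, smul_eq_mul] at *
    calc ∑ i, x i * (c * a i) = c * ∑ i, x i * a i := by
          rw [Finset.mul_sum]; congr 1; funext i; ring
      _ = 0 := by rw [h1]; ring

/-- incremental subspace N_E -/
def NN (E : Finset (Fin m)) : Submodule ℚ (Cell I → ℚ) :=
  LL I E ⊓ perp I (⨆ j ∈ E, LL I (E.erase j))

/-- F-marginal of x evaluated at the marginal cell i_F -/
def marg (x : Cell I → ℚ) (F : Finset (Fin m)) (i : Cell I) : ℚ :=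
  ∑ j : Cell I, if ∀ k ∈ F, j k = i k then x j else 0

/-- kernel of the configuration determined by a family of facets:
tables all of whose F-marginals vanish, F ∈ Fs -/
def kern (Fs : Finset (Finset (Fin m))) : Submodule ℚ (Cell I → ℚ) where
  carrier := {y | ∀ F ∈ Fs, ∀ i, marg I y F i = 0}
  zero_mem' := by intro F hF i; simp [marg]
  add_mem' := by
    intro a b ha hb F hF i
    have h1 := ha F hF i
    have h2 := hb F hF i
    simp only [marg, Pi.add_apply] at *
    have key : (∑ j : Cell I, if ∀ k ∈ F, j k = i k then a j + b j else 0)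
        = (∑ j : Cell I, if ∀ k ∈ F, j k = i k then a j else 0)
          + (∑ j : Cell I, if ∀ k ∈ F, j k = i k then b j else 0) := by
      rw [← Finset.sum_add_distrib]
      apply Finset.sum_congr rfl
      intro j _
      split <;> simp
    rw [key, h1, h2]; ring
  smul_mem' := by
    intro c a ha F hF i
    have h1 := ha F hF i
    simp only [marg, Pi.smul_apply, smul_eq_mul] at *
    calc ∑ j : Cell I, (if ∀ k ∈ F, j k = i k then c * a j else 0)
        = c * ∑ j : Cell I, (if ∀ k ∈ F, j k = i k then a j else 0) := by
          rw [Finset.mul_sum]; congr 1; funext j; split <;> simp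
      _ = 0 := by rw [h1]; ring

/-- a (finite) abstract simplicial complex on [m] -/
def IsComplex (Δ : Finset (Finset (Fin m))) : Prop :=
  ∀ F ∈ Δ, ∀ F' ⊆ F, F' ∈ Δ

/-- the maximal elements (facets) of Δ -/
def facets (Δ : Finset (Finset (Fin m))) : Finset (Finset (Fin m)) :=
  Δ.filter (fun D => ∀ F ∈ Δ, D ⊆ F → F = D)

/-- row space of the hierarchical-model configuration A_Δ -/
def rowsp (Δ : Finset (Finset (Fin m))) : Submodule ℚ (Cell I → ℚ) :=
  ⨆ D ∈ facets Δ, LL I D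

/-- single partial difference operator ∂_j -/
def pd1 (hI : ∀ j, 0 < I j) (j : Fin m) (x : Cell I → ℚ) : Cell I → ℚ :=
  fun i => x i - x (Function.update i j ⟨0, hI j⟩)

/-- ∂_E: composition of the (commuting) ∂_j, j ∈ E -/
noncomputable def pdE (hI : ∀ j, 0 < I j) (E : Finset (Fin m)) : (Cell I → ℚ) → (Cell I → ℚ) :=
  E.toList.foldr (fun j f => pd1 I hI j ∘ f) id

end Hier

/-! Over an ordered field the dot product is anisotropic, so every subspace is complemented by
its orthogonal complement. Hence `L_E` splits as `(Σ_{j ∈ E} L_{E∖{j}}) ⊔ N_E`, and by strong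
induction on `E` each `L_{E∖{j}}` is the sum of the `N_F` with `F ⊆ E∖{j}`. -/

open Matrix LinearMap.BilinForm

section DotProductForm

variable {K n : Type*} [Fintype n]

abbrev dotProductForm [CommSemiring K] : LinearMap.BilinForm K (n → K) :=
  dotProductBilin K K

theorem dotProductForm_isRefl [CommSemiring K] :
    (dotProductForm : LinearMap.BilinForm K (n → K)).IsRefl :=
  fun x y h => by simpa [dotProduct_comm] using h

variable [Field K] [LinearOrder K] [IsStrictOrderedRing K]

theorem isCompl_dotProductForm_orthogonal (W : Submodule K (n → K)) :
    IsCompl W (dotProductForm.orthogonal W) :=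
  (isCompl_orthogonal_iff_disjoint dotProductForm_isRefl).2 <|
    Submodule.disjoint_def.2 fun x hx hx' => dotProduct_self_eq_zero.1 (hx' x hx)

theorem sup_inf_dotProductForm_orthogonal_of_le {M L : Submodule K (n → K)} (h : M ≤ L) :
    M ⊔ L ⊓ dotProductForm.orthogonal M = L := by
  rw [inf_comm, ← sup_inf_assoc_of_le _ h, (isCompl_dotProductForm_orthogonal M).sup_eq_top,
    top_inf_eq]

end DotProductForm

namespace Hier

variable {m : ℕ} (I : Fin m → ℕ)

theorem perp_eq_dotProductForm_orthogonal (S : Submodule ℚ (Cell I → ℚ)) :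
    perp I S = dotProductForm.orthogonal S :=
  rfl

theorem LL_mono {E F : Finset (Fin m)} (h : F ⊆ E) : LL I F ≤ LL I E :=
  fun _ hx i i' hii' => hx i i' fun j hj => hii' j (h hj)

theorem iSup_LL_erase_le (E : Finset (Fin m)) : ⨆ j ∈ E, LL I (E.erase j) ≤ LL I E :=
  iSup₂_le fun j _ => LL_mono I (erase_subset j E)

theorem iSup_LL_erase_sup_NN (E : Finset (Fin m)) :
    (⨆ j ∈ E, LL I (E.erase j)) ⊔ NN I E = LL I E := by
  rw [NN, perp_eq_dotProductForm_orthogonal]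
  exact sup_inf_dotProductForm_orthogonal_of_le (iSup_LL_erase_le I E)

theorem stmt6 (E : Finset (Fin m)) :
    LL I E = ⨆ F ∈ E.powerset, NN I F := by
  induction E using Finset.strongInduction with
  | H E ih =>
    refine le_antisymm ?_ (iSup₂_le fun F hF => inf_le_left.trans (LL_mono I (mem_powerset.1 hF)))
    rw [← iSup_LL_erase_sup_NN]
    refine sup_le (iSup₂_le fun j hj => ?_) (le_iSup₂_of_le E (mem_powerset_self E) le_rfl)
    rw [ih _ (erase_ssubset hj)]
    exact biSup_mono fun F hF => powerset_mono.2 (erase_subset j E) hF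

end Hier
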